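/- Assume μ_1 − λ ≥ ρ_1 > 0 and that for every j ∉ C, if a_j ∈ S_h for some h then a_j = μ_h − λ + ρ_h. Then the GNS-lifted cover inequality ∑_{j∈C} x_j + ∑_{j∉C} g_{1/ρ_1}(a_j) x_j ≤ |C| − 1 is valid for P and defines a facet of conv(P); i.e., it is satisfied by every x ∈ P and there exist n affinely independent points x ∈ P satisfying it with equality. -/

import Mathlib

/-- `μ_h = a_1 + ⋯ + a_h` (as a real number). -/
noncomputable def mu (a : ℕ → ℕ) (h : ℕ) : ℝ := ∑ i ∈ Finset.Icc 1 h, (a i : ℝ)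

/-- `λ = μ_t − b`, the excess weight of the cover. -/
noncomputable def lam (a : ℕ → ℕ) (t b : ℕ) : ℝ := mu a t - (b : ℝ)

/-- `ρ_h = max(0, a_{h+1} − (a_1 − λ))`. -/
noncomputable def rho (a : ℕ → ℕ) (t b : ℕ) (h : ℕ) : ℝ :=
  max 0 ((a (h + 1) : ℝ) - ((a 1 : ℝ) - lam a t b))

/-- `w_k(x) = k·x + (1 − k·ρ₁)/2`, where `r` stands for `ρ₁`. -/
noncomputable def wk (r k x : ℝ) : ℝ := k * x + (1 - k * r) / 2

open Finset

/-!
Let `φ_h = μ_h − λ + ρ_h` be the left end of `F_h`. As no non-cover weight lies inside an `S_h`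
except at its right end, every non-cover item `j` gets an integral coefficient `h < t`, with
`μ_h − λ < a_j ≤ μ_{h+1} − λ` and `φ_h ≤ a_j`.

Validity is superadditivity: weights of this kind for levels `h, h' ≥ 1` add up to one of level
`h + h'`, or to more than `b` once `h + h' ≥ t`, because `ρ` is antitone and any `h'` consecutive
cover weights after the first `h` weigh at most `μ_{h'+1} − a_1 ≤ φ_{h'}`. A feasible point with
`s` cover items, which weigh at least `μ_t − μ_{t−s}`, leaves at most `μ_{t−s} − λ` for the others,
so their coefficients add up to less than `t − s`.

For the facet, the points `C ∖ {i}` and, for `j ∉ C` of coefficient `h`, `{j} ∪ {h + 2, …, t}`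
are tight, and they are even linearly independent since `t ≥ 2`.
-/

lemma mu_sub_lam (a : ℕ → ℕ) (t b : ℕ) : mu a t - lam a t b = b := by
  rw [lam]
  ring

lemma lam_pos {a : ℕ → ℕ} {t b : ℕ} (hcover : (b : ℝ) < mu a t) : 0 < lam a t b := by
  rw [lam]
  linarith

lemma mu_zero (a : ℕ → ℕ) : mu a 0 = 0 := by simp [mu]

lemma mu_succ (a : ℕ → ℕ) (h : ℕ) : mu a (h + 1) = mu a h + a (h + 1) := by
  simp [mu, sum_Icc_succ_top]

lemma mu_one (a : ℕ → ℕ) : mu a 1 = a 1 := by simp [mu]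

lemma mu_mono (a : ℕ → ℕ) : Monotone (mu a) := fun _ _ hh =>
  sum_le_sum_of_subset_of_nonneg (Icc_subset_Icc le_rfl hh) fun _ _ _ => by positivity

lemma mu_add_sub_mu_le {a : ℕ → ℕ} {t : ℕ} (hmono : AntitoneOn a (Set.Icc 1 t)) {k l m : ℕ}
    (hl : 1 ≤ l) (hlk : l ≤ k) (hkm : k + m ≤ t) :
    mu a (k + m) - mu a k ≤ mu a (l + m) - mu a l := by
  induction m with
  | zero => simp
  | succ m ih =>
    have hstep : (a (k + m + 1) : ℝ) ≤ a (l + m + 1) := by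
      exact_mod_cast hmono ⟨by omega, by omega⟩ ⟨by omega, by omega⟩ (by omega)
    rw [← add_assoc, ← add_assoc, mu_succ, mu_succ]
    linarith [ih (by omega)]

lemma mu_le_mu_add_mu_sub_mu_one {a : ℕ → ℕ} {t : ℕ} (hmono : AntitoneOn a (Set.Icc 1 t))
    {K k m : ℕ} (hk : 1 ≤ k) (hKt : K ≤ t) (hK : K ≤ k + m) :
    mu a K ≤ mu a k + (mu a (m + 1) - mu a 1) := by
  rcases le_or_gt K k with hKk | hkK
  · linarith [mu_mono a hKk, mu_mono a (by omega : 1 ≤ m + 1)]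
  · obtain ⟨m', rfl⟩ := Nat.exists_eq_add_of_le hkK.le
    linarith [mu_add_sub_mu_le hmono le_rfl hk hKt, mu_mono a (by omega : 1 + m' ≤ m + 1)]

section Knapsack

variable {a : ℕ → ℕ} {t b n : ℕ}

/-- `μ_h − λ + ρ_h`: the right end of `S_h` and the left end of `F_h`. -/
noncomputable def plateauStart (a : ℕ → ℕ) (t b h : ℕ) : ℝ := mu a h - lam a t b + rho a t b h

lemma plateauStart_zero (hlam : 0 ≤ lam a t b) : plateauStart a t b 0 = 0 := by
  simp [plateauStart, rho, mu_zero, max_eq_right hlam]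

lemma mu_succ_sub_le_plateauStart (h : ℕ) : mu a (h + 1) - a 1 ≤ plateauStart a t b h := by
  have := le_max_right 0 ((a (h + 1) : ℝ) - (a 1 - lam a t b))
  rw [plateauStart, rho, mu_succ]
  linarith

lemma rho_le_rho_of_le (hmono : AntitoneOn a (Set.Icc 1 t)) {h h' : ℕ} (hh : h ≤ h') (ht : h' < t) :
    rho a t b h' ≤ rho a t b h := by
  have : (a (h' + 1) : ℝ) ≤ a (h + 1) := by
    exact_mod_cast hmono ⟨by omega, by omega⟩ ⟨by omega, by omega⟩ (by omega)
  unfold rho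
  gcongr

/-- A lower bound on the weight of any set of items whose lifting coefficients add up to `H`;
for `H ≥ t` such a set does not fit into the knapsack. -/
def ReachesLevel (a : ℕ → ℕ) (t b H : ℕ) (z : ℝ) : Prop :=
  H = 0 ∨ (H < t ∧ mu a H - lam a t b < z ∧ plateauStart a t b H ≤ z) ∨ (t ≤ H ∧ (b : ℝ) < z)

lemma ReachesLevel.mono {H : ℕ} {z z' : ℝ} (h : ReachesLevel a t b H z) (hz : z ≤ z') :
    ReachesLevel a t b H z' := by
  rcases h with h | ⟨hH, hlow, hstart⟩ | ⟨hH, hb⟩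
  · exact Or.inl h
  · exact Or.inr (Or.inl ⟨hH, by linarith, by linarith⟩)
  · exact Or.inr (Or.inr ⟨hH, by linarith⟩)

lemma mu_le_mu_add_plateauStart (hmono : AntitoneOn a (Set.Icc 1 t)) {H H' K : ℕ}
    (hH : 1 ≤ H) (hKt : K ≤ t) (hK : K ≤ H + H') :
    mu a K ≤ mu a H + plateauStart a t b H' := by
  have hrun := mu_le_mu_add_mu_sub_mu_one hmono hH hKt hK
  rw [mu_one] at hrun
  linarith [mu_succ_sub_le_plateauStart (a := a) (t := t) (b := b) H']

lemma ReachesLevel.add (hmono : AntitoneOn a (Set.Icc 1 t)) {H H' : ℕ} {z z' : ℝ}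
    (hz : 0 ≤ z) (hz' : 0 ≤ z') (h : ReachesLevel a t b H z) (h' : ReachesLevel a t b H' z') :
    ReachesLevel a t b (H + H') (z + z') := by
  rcases Nat.eq_zero_or_pos H with rfl | hH
  · simpa using h'.mono (le_add_of_nonneg_left hz)
  rcases Nat.eq_zero_or_pos H' with rfl | hH'
  · simpa using h.mono (le_add_of_nonneg_right hz')
  rcases h with h0 | ⟨hHt, hlow, hstart⟩ | ⟨hHt, hb⟩
  · omega
  · rcases h' with h0 | ⟨hHt', -, hstart'⟩ | ⟨hHt', hb'⟩
    · omega
    · have hbound {K : ℕ} (hKt : K ≤ t) (hK : K ≤ H + H') :=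
        mu_le_mu_add_plateauStart (b := b) hmono hH hKt hK
      by_cases hsum : H + H' < t
      · have := rho_le_rho_of_le (b := b) hmono (by omega : H ≤ H + H') hsum
        refine Or.inr (Or.inl ⟨hsum, ?_, ?_⟩)
        · linarith [hbound hsum.le le_rfl]
        · rw [plateauStart] at hstart ⊢
          linarith [hbound hsum.le le_rfl]
      · refine Or.inr (Or.inr ⟨by omega, ?_⟩)
        linarith [hbound le_rfl (by omega), mu_sub_lam a t b]
    · exact Or.inr (Or.inr ⟨by omega, by linarith⟩)
  · exact Or.inr (Or.inr ⟨by omega, by linarith⟩)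

lemma ReachesLevel.sum (hmono : AntitoneOn a (Set.Icc 1 t)) {ι : Type*} (s : Finset ι)
    (ℓ : ι → ℕ) (w : ι → ℝ) (hw : ∀ i ∈ s, 0 ≤ w i)
    (h : ∀ i ∈ s, ReachesLevel a t b (ℓ i) (w i)) :
    ReachesLevel a t b (∑ i ∈ s, ℓ i) (∑ i ∈ s, w i) := by
  classical
  induction s using Finset.induction_on with
  | empty => exact Or.inl rfl
  | insert i s hi ih =>
    rw [sum_insert hi, sum_insert hi]
    exact (h i (mem_insert_self i s)).add hmono (hw i (mem_insert_self i s))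
      (sum_nonneg fun j hj => hw j (mem_insert_of_mem hj))
      (ih (fun j hj => hw j (mem_insert_of_mem hj)) fun j hj => h j (mem_insert_of_mem hj))

lemma ReachesLevel.mu_sub_lam_lt {H K : ℕ} {z : ℝ} (h : ReachesLevel a t b H z)
    (hlam : 0 < lam a t b) (hz : 0 ≤ z) (hKH : K ≤ H) (hKt : K ≤ t) :
    mu a K - lam a t b < z := by
  rcases h with rfl | ⟨-, hlow, -⟩ | ⟨-, hb⟩
  · rw [Nat.le_zero.mp hKH, mu_zero]
    linarith
  · linarith [mu_mono a hKH]
  · linarith [mu_mono a hKt, mu_sub_lam a t b]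

lemma exists_mu_sub_lam_lt_le (hcover : (b : ℝ) < mu a t) {z : ℝ} (hz : 0 < z) (hzb : z ≤ b) :
    ∃ h < t, mu a h - lam a t b < z ∧ z ≤ mu a (h + 1) - lam a t b := by
  classical
  have hzt : z ≤ mu a t - lam a t b := by rw [mu_sub_lam]; exact hzb
  have hex : ∃ k, z ≤ mu a k - lam a t b := ⟨t, hzt⟩
  have hk0 : Nat.find hex ≠ 0 := fun h0 => by
    have := Nat.find_spec hex
    rw [h0, mu_zero, lam] at this
    linarith
  refine ⟨Nat.find hex - 1, ?_, ?_, ?_⟩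
  · have := Nat.find_min' hex hzt
    omega
  · exact lt_of_not_ge (Nat.find_min hex (by omega))
  · rw [Nat.sub_add_cancel (Nat.one_le_iff_ne_zero.mpr hk0)]
    exact Nat.find_spec hex

lemma exists_level {g : ℝ → ℝ}
    (hcover : (b : ℝ) < mu a t)
    (hGF : ∀ h : ℕ, h ≤ t - 1 → ∀ z : ℝ,
      plateauStart a t b h < z → z ≤ mu a (h + 1) - lam a t b → g z = h)
    (hGS : ∀ h : ℕ, 1 ≤ h → h ≤ t - 1 → ∀ z : ℝ,
      mu a h - lam a t b < z → z ≤ plateauStart a t b h →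
      g z = h - (plateauStart a t b h - z) / rho a t b 1)
    {z : ℝ} (hz : 0 < z) (hzb : z ≤ b)
    (hend : ∀ h : ℕ, 1 ≤ h → h ≤ t - 1 →
      mu a h - lam a t b < z → z ≤ plateauStart a t b h → z = plateauStart a t b h) :
    ∃ h < t, z ≤ mu a (h + 1) - lam a t b ∧ ReachesLevel a t b h z ∧ g z = h := by
  obtain ⟨h, hht, hlow, hup⟩ := exists_mu_sub_lam_lt_le hcover hz hzb
  rcases lt_or_ge (plateauStart a t b h) z with hF | hS
  · exact ⟨h, hht, hup, Or.inr (Or.inl ⟨hht, hlow, hF.le⟩), hGF h (by omega) z hF hup⟩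
  · have hh : 1 ≤ h := Nat.one_le_iff_ne_zero.mpr fun h0 => by
      rw [h0, plateauStart_zero (lam_pos hcover).le] at hS
      linarith
    have hzend := hend h hh (by omega) hlow hS
    refine ⟨h, hht, hup, Or.inr (Or.inl ⟨hht, hlow, hzend.ge⟩), ?_⟩
    simpa [← hzend] using hGS h hh (by omega) z hlow hS

/-- The coordinates `j : Fin n` with `j < k`; coordinate `j` carries item `j + 1`, so these are
the items `1, …, k`. -/
def firstItems (n k : ℕ) : Finset (Fin n) := {j | (j : ℕ) < k}

@[simp]
lemma mem_firstItems {k : ℕ} {j : Fin n} : j ∈ firstItems n k ↔ (j : ℕ) < k := by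
  simp [firstItems]

lemma card_firstItems {k : ℕ} (hk : k ≤ n) : #(firstItems n k) = k := by
  simp [firstItems, Fin.card_filter_val_lt, hk]

lemma firstItems_mono {k k' : ℕ} (hk : k ≤ k') : firstItems n k ⊆ firstItems n k' := by
  intro j
  simp only [mem_firstItems]
  omega

lemma sum_firstItems (f : ℕ → ℝ) {k : ℕ} (hk : k ≤ n) :
    ∑ j ∈ firstItems n k, f j = ∑ i ∈ range k, f i := by
  rw [firstItems, sum_filter, Fin.sum_univ_eq_sum_range (fun i => if i < k then f i else 0),
    ← sum_filter]
  congr 1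
  ext i
  simp only [mem_filter, mem_range]
  omega

lemma mu_eq_sum_firstItems (a : ℕ → ℕ) {k : ℕ} (hk : k ≤ n) :
    mu a k = ∑ j ∈ firstItems n k, (a (j + 1) : ℝ) := by
  rw [sum_firstItems (fun i => (a (i + 1) : ℝ)) hk]
  induction k with
  | zero => exact mu_zero a
  | succ k ih => rw [mu_succ, sum_range_succ, ih (by omega)]

lemma sum_le_mu_card (hmono : AntitoneOn a (Set.Icc 1 t)) {D : Finset (Fin n)}
    (hD : D ⊆ firstItems n t) : ∑ j ∈ D, (a (j + 1) : ℝ) ≤ mu a #D := by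
  induction D using Finset.induction_on_max with
  | empty => simp [mu_zero]
  | insert d s hlt ih =>
    have hd : (d : ℕ) < t := mem_firstItems.mp (hD (mem_insert_self d s))
    have hs : #s ≤ d := by
      simpa using card_le_card fun x hx => mem_Iio.mpr (hlt x hx)
    have : (a (d + 1) : ℝ) ≤ a (#s + 1) := by
      exact_mod_cast hmono ⟨by omega, by omega⟩ ⟨by omega, by omega⟩ (by omega)
    rw [sum_insert fun hd' => (hlt d hd').false, card_insert_of_notMem fun hd' => (hlt d hd').false,
      mu_succ]
    linarith [ih ((subset_insert d s).trans hD)]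

lemma mu_sub_mu_le_sum (hmono : AntitoneOn a (Set.Icc 1 t)) (htn : t ≤ n) {D : Finset (Fin n)}
    (hD : D ⊆ firstItems n t) : mu a t - mu a (t - #D) ≤ ∑ j ∈ D, (a (j + 1) : ℝ) := by
  have hcard : #(firstItems n t \ D) = t - #D := by
    rw [card_sdiff_of_subset hD, card_firstItems htn]
  have := sum_le_mu_card hmono (sdiff_subset (s := firstItems n t) (t := D))
  rw [hcard, sum_sdiff_eq_sub hD, ← mu_eq_sum_firstItems a htn] at this
  linarith

lemma sum_mul_eq_sum_filter {ι : Type*} [Fintype ι] {x : ι → ℝ} (hx : ∀ j, x j = 0 ∨ x j = 1)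
    (c : ι → ℝ) : ∑ j, c j * x j = ∑ j ∈ univ.filter (fun j => x j = 1), c j := by
  rw [sum_filter]
  refine sum_congr rfl fun j _ => ?_
  rcases hx j with h | h <;> simp [h]

lemma sum_lifted_le (hmono : AntitoneOn a (Set.Icc 1 t)) (hcover : (b : ℝ) < mu a t)
    (htn : t ≤ n) (ℓ : Fin n → ℕ)
    (hℓ : ∀ j : Fin n, t ≤ (j : ℕ) → ReachesLevel a t b (ℓ j) (a (j + 1)))
    (S : Finset (Fin n)) (hS : ∑ j ∈ S, (a (j + 1) : ℝ) ≤ b) :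
    ∑ j ∈ S, (if (j : ℕ) < t then 1 else (ℓ j : ℝ)) ≤ t - 1 := by
  set C := firstItems n t
  have hC {j : Fin n} : j ∈ C ↔ (j : ℕ) < t := mem_firstItems
  set H := ∑ j ∈ S \ C, ℓ j
  have hreach : ReachesLevel a t b H (∑ j ∈ S \ C, (a (j + 1) : ℝ)) :=
    ReachesLevel.sum hmono _ _ _ (fun _ _ => by positivity) fun j hj =>
      hℓ j (not_lt.mp (hC.not.mp (mem_sdiff.mp hj).2))
  have hcov := mu_sub_mu_le_sum hmono htn (inter_subset_right (s₁ := S) (s₂ := C))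
  rw [← sum_inter_add_sum_sdiff S C] at hS ⊢
  have hcount : #(S ∩ C) + H + 1 ≤ t := by
    by_contra! hover
    have := hreach.mu_sub_lam_lt (lam_pos hcover) (by positivity)
      (by omega : t - #(S ∩ C) ≤ H) (Nat.sub_le _ _)
    linarith [mu_sub_lam a t b]
  rw [sum_congr rfl fun j hj => if_pos (hC.mp (mem_inter.mp hj).2),
    sum_congr rfl fun j hj => if_neg (hC.not.mp (mem_sdiff.mp hj).2), sum_const, nsmul_eq_mul,
    mul_one, ← Nat.cast_sum]
  have : ((#(S ∩ C) + H + 1 : ℕ) : ℝ) ≤ t := by exact_mod_cast hcount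
  push_cast at this
  linarith

lemma linearIndependent_indicators (ht : 2 ≤ t) (htn : t ≤ n) (T : Fin n → Finset (Fin n))
    (hcov : ∀ i : Fin n, (i : ℕ) < t → T i = (firstItems n t).erase i)
    (hrest : ∀ i j : Fin n, t ≤ (i : ℕ) → t ≤ (j : ℕ) → (j ∈ T i ↔ j = i)) :
    LinearIndependent ℝ fun i j => if j ∈ T i then (1 : ℝ) else 0 := by
  set C := firstItems n t
  have hC {j : Fin n} : j ∈ C ↔ (j : ℕ) < t := mem_firstItems
  rw [Fintype.linearIndependent_iff]
  intro g hg
  have hcoord (k : Fin n) : ∑ i, g i * (if k ∈ T i then 1 else 0) = 0 := by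
    simpa using congrFun hg k
  have hrest0 (k : Fin n) (hk : t ≤ (k : ℕ)) : g k = 0 := by
    rw [← hcoord k, sum_eq_single k, if_pos ((hrest k k hk hk).mpr rfl), mul_one]
    · intro i _ hik
      rcases lt_or_ge (i : ℕ) t with hi | hi
      · rw [hcov i hi, if_neg fun hk' => by have := hC.mp (mem_of_mem_erase hk'); omega,
          mul_zero]
      · rw [if_neg fun hk' => hik ((hrest i k hi hk).mp hk').symm, mul_zero]
    · simp
  have hcov_eq (k : Fin n) (hk : (k : ℕ) < t) : g k = ∑ i ∈ C, g i := by
    have hsum : ∑ i, g i * (if k ∈ T i then 1 else 0) = ∑ i ∈ C.erase k, g i := by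
      rw [← univ_inter (C.erase k), ← sum_ite_mem]
      refine sum_congr rfl fun i _ => ?_
      rcases lt_or_ge (i : ℕ) t with hi | hi
      · simp [hcov i hi, hC, hk, hi, eq_comm]
      · simp [hrest0 i hi]
    rw [hcoord k, sum_erase_eq_sub (hC.mpr hk)] at hsum
    linarith
  have hsum0 : ∑ i ∈ C, g i = 0 := by
    have hmul : ∑ i ∈ C, g i = t * ∑ i ∈ C, g i := by
      conv_lhs => rw [sum_congr rfl fun i hi => hcov_eq i (hC.mp hi)]
      rw [sum_const, card_firstItems htn, nsmul_eq_mul]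
    have ht1 : (t : ℝ) - 1 ≠ 0 := by
      have : (2 : ℝ) ≤ t := by exact_mod_cast ht
      linarith
    exact (mul_eq_zero.mp (by linarith : ((t : ℝ) - 1) * ∑ i ∈ C, g i = 0)).resolve_left ht1
  intro k
  rcases lt_or_ge (k : ℕ) t with hk | hk
  · rw [hcov_eq k hk, hsum0]
  · exact hrest0 k hk

lemma exists_tight_points (ht : 2 ≤ t) (htn : t ≤ n) (hmono : AntitoneOn a (Set.Icc 1 t))
    (hmin : mu a t - (a t : ℝ) ≤ b) (ℓ : Fin n → ℕ)
    (hℓ : ∀ j : Fin n, t ≤ (j : ℕ) → ℓ j < t ∧ (a (j + 1) : ℝ) ≤ mu a (ℓ j + 1) - lam a t b) :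
    ∃ T : Fin n → Finset (Fin n),
      (LinearIndependent ℝ fun i j => if j ∈ T i then (1 : ℝ) else 0) ∧
      ∀ i, ∑ j ∈ T i, (a (j + 1) : ℝ) ≤ b ∧
        ∑ j ∈ T i, (if (j : ℕ) < t then 1 else (ℓ j : ℝ)) = t - 1 := by
  set C := firstItems n t
  have hC {j : Fin n} : j ∈ C ↔ (j : ℕ) < t := mem_firstItems
  refine ⟨fun i => if (i : ℕ) < t then C.erase i else insert i (C \ firstItems n (ℓ i + 1)),
    linearIndependent_indicators ht htn _ (fun i hi => if_pos hi) (fun i j hi hj => ?_),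
    fun i => ?_⟩
  · rw [if_neg (by omega), mem_insert, mem_sdiff, hC]
    exact ⟨fun h => h.resolve_right fun h' => by omega, Or.inl⟩
  rcases lt_or_ge (i : ℕ) t with hi | hi
  · have hai : (a t : ℝ) ≤ a (i + 1) := by
      exact_mod_cast hmono ⟨by omega, by omega⟩ ⟨by omega, le_rfl⟩ (by omega)
    simp only [if_pos hi]
    rw [sum_erase_eq_sub (hC.mpr hi), ← mu_eq_sum_firstItems a htn,
      sum_congr rfl fun j hj => if_pos (hC.mp (mem_of_mem_erase hj)), sum_const,
      card_erase_of_mem (hC.mpr hi), card_firstItems htn, nsmul_one, Nat.cast_sub (by omega)]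
    exact ⟨by linarith, by simp⟩
  · obtain ⟨hℓt, hup⟩ := hℓ i hi
    have hsub : firstItems n (ℓ i + 1) ⊆ C := firstItems_mono (by omega)
    have hiC : i ∉ C \ firstItems n (ℓ i + 1) := fun h => by
      have := hC.mp (mem_sdiff.mp h).1
      omega
    simp only [if_neg (not_lt.mpr hi)]
    rw [sum_insert hiC, sum_insert hiC, if_neg (not_lt.mpr hi), sum_sdiff_eq_sub hsub,
      ← mu_eq_sum_firstItems a htn, ← mu_eq_sum_firstItems a (by omega),
      sum_congr rfl fun j hj => if_pos (hC.mp (mem_sdiff.mp hj).1), sum_const,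
      card_sdiff_of_subset hsub, card_firstItems htn, card_firstItems (by omega), nsmul_one,
      Nat.cast_sub (by omega)]
    exact ⟨by linarith [mu_sub_lam a t b], by push_cast; ring⟩

end Knapsack

theorem gns_lifting_facet_defining_general
    (t n b : ℕ) (a : ℕ → ℕ) (gGNS : ℝ → ℝ)
    (ht : 2 ≤ t)
    (hmono : ∀ i j, 1 ≤ i → i ≤ j → j ≤ t → a j ≤ a i)
    (hcover : (b : ℝ) < mu a t)
    (hmin : mu a t - (a t : ℝ) ≤ (b : ℝ))
    (htn : t < n)
    (hposn : ∀ i, 1 ≤ i → i ≤ n → 0 < a i)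
    (halb : ∀ i, 1 ≤ i → i ≤ n → a i ≤ b)
    (hGF : ∀ h : ℕ, h ≤ t - 1 → ∀ z : ℝ,
      mu a h - lam a t b + rho a t b h < z → z ≤ mu a (h + 1) - lam a t b →
      gGNS z = (h : ℝ))
    (hGS : ∀ h : ℕ, 1 ≤ h → h ≤ t - 1 → ∀ z : ℝ,
      mu a h - lam a t b < z → z ≤ mu a h - lam a t b + rho a t b h →
      gGNS z = (h : ℝ) - (mu a h - lam a t b + rho a t b h - z) / rho a t b 1)
    (hScond : ∀ j, t + 1 ≤ j → j ≤ n → ∀ h : ℕ, 1 ≤ h → h ≤ t - 1 →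
      mu a h - lam a t b < (a j : ℝ) →
      (a j : ℝ) ≤ mu a h - lam a t b + rho a t b h →
      (a j : ℝ) = mu a h - lam a t b + rho a t b h) :
    (∀ x : Fin n → ℝ, (∀ j, x j = 0 ∨ x j = 1) →
      (∑ j : Fin n, (a ((j : ℕ) + 1) : ℝ) * x j) ≤ (b : ℝ) →
      (∑ j : Fin n,
        (if (j : ℕ) + 1 ≤ t then 1 else gGNS (a ((j : ℕ) + 1))) * x j) ≤ (t : ℝ) - 1) ∧
    (∃ xs : Fin n → (Fin n → ℝ), AffineIndependent ℝ xs ∧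
      ∀ i : Fin n, (∀ j, xs i j = 0 ∨ xs i j = 1) ∧
        (∑ j : Fin n, (a ((j : ℕ) + 1) : ℝ) * xs i j) ≤ (b : ℝ) ∧
        (∑ j : Fin n,
          (if (j : ℕ) + 1 ≤ t then 1 else gGNS (a ((j : ℕ) + 1))) * xs i j)
            = (t : ℝ) - 1) := by
  have hanti : AntitoneOn a (Set.Icc 1 t) := fun i hi j hj hij => hmono i j hi.1 hij hj.2
  have hlevel (j : Fin n) : ∃ h : ℕ, t ≤ (j : ℕ) → h < t ∧
      (a (j + 1) : ℝ) ≤ mu a (h + 1) - lam a t b ∧ ReachesLevel a t b h (a (j + 1)) ∧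
      gGNS (a (j + 1)) = h := by
    by_cases hj : t ≤ (j : ℕ)
    · obtain ⟨h, hh⟩ := exists_level hcover hGF hGS
        (by exact_mod_cast hposn (j + 1) (by omega) (by omega))
        (by exact_mod_cast halb (j + 1) (by omega) (by omega))
        (hScond (j + 1) (by omega) (by omega))
      exact ⟨h, fun _ => hh⟩
    · exact ⟨0, fun h => absurd h hj⟩
  choose ℓ hℓ using hlevel
  have hcoef (j : Fin n) : (if (j : ℕ) + 1 ≤ t then 1 else gGNS (a ((j : ℕ) + 1))) =
      if (j : ℕ) < t then 1 else (ℓ j : ℝ) := by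
    by_cases hj : (j : ℕ) < t
    · rw [if_pos hj, if_pos (by omega)]
    · rw [if_neg hj, if_neg (by omega), (hℓ j (by omega)).2.2.2]
  simp only [hcoef]
  obtain ⟨T, hT, hTi⟩ := exists_tight_points ht htn.le hanti hmin ℓ
    fun j hj => ⟨(hℓ j hj).1, (hℓ j hj).2.1⟩
  refine ⟨fun x hx hxb => ?_,
    ⟨_, hT.affineIndependent, fun i => ⟨fun j => by split_ifs <;> simp, ?_, ?_⟩⟩⟩
  · rw [sum_mul_eq_sum_filter hx] at hxb ⊢
    exact sum_lifted_le hanti hcover htn.le ℓ (fun j hj => (hℓ j hj).2.2.1) _ hxb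
  · simpa using (hTi i).1
  · simpa using (hTi i).2

/-- Assume `μ₁ − λ ≥ ρ₁ > 0` and that every weight `a_j`, `j ∉ C`,
lying in some `S_h` equals the right endpoint `μ_h − λ + ρ_h`. Then the GNS-lifted
cover inequality is valid for `P` and defines a facet of `conv(P)`. -/
theorem gns_lifting_facet_defining
    (t n b : ℕ) (a : ℕ → ℕ) (gGNS : ℝ → ℝ)
    (ht : 2 ≤ t)
    (hpos : ∀ i, 1 ≤ i → i ≤ t → 0 < a i)
    (hmono : ∀ i j, 1 ≤ i → i ≤ j → j ≤ t → a j ≤ a i)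
    (hcover : (b : ℝ) < mu a t)
    (hmin : mu a t - (a t : ℝ) ≤ (b : ℝ))
    (hrho1 : 0 < rho a t b 1)
    (htn : t < n)
    (hposn : ∀ i, 1 ≤ i → i ≤ n → 0 < a i)
    (halb : ∀ i, 1 ≤ i → i ≤ n → a i ≤ b)
    (hmain : rho a t b 1 ≤ mu a 1 - lam a t b)
    (hG0 : gGNS 0 = 0)
    (hGF : ∀ h : ℕ, h ≤ t - 1 → ∀ z : ℝ,
      mu a h - lam a t b + rho a t b h < z → z ≤ mu a (h + 1) - lam a t b →
      gGNS z = (h : ℝ))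
    (hGS : ∀ h : ℕ, 1 ≤ h → h ≤ t - 1 → ∀ z : ℝ,
      mu a h - lam a t b < z → z ≤ mu a h - lam a t b + rho a t b h →
      gGNS z = (h : ℝ) - (mu a h - lam a t b + rho a t b h - z) / rho a t b 1)
    (hScond : ∀ j, t + 1 ≤ j → j ≤ n → ∀ h : ℕ, 1 ≤ h → h ≤ t - 1 →
      mu a h - lam a t b < (a j : ℝ) →
      (a j : ℝ) ≤ mu a h - lam a t b + rho a t b h →
      (a j : ℝ) = mu a h - lam a t b + rho a t b h) :
    (∀ x : Fin n → ℝ, (∀ j, x j = 0 ∨ x j = 1) →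
      (∑ j : Fin n, (a ((j : ℕ) + 1) : ℝ) * x j) ≤ (b : ℝ) →
      (∑ j : Fin n,
        (if (j : ℕ) + 1 ≤ t then 1 else gGNS (a ((j : ℕ) + 1))) * x j) ≤ (t : ℝ) - 1) ∧
    (∃ xs : Fin n → (Fin n → ℝ), AffineIndependent ℝ xs ∧
      ∀ i : Fin n, (∀ j, xs i j = 0 ∨ xs i j = 1) ∧
        (∑ j : Fin n, (a ((j : ℕ) + 1) : ℝ) * xs i j) ≤ (b : ℝ) ∧
        (∑ j : Fin n,
          (if (j : ℕ) + 1 ≤ t then 1 else gGNS (a ((j : ℕ) + 1))) * xs i j)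
            = (t : ℝ) - 1) :=
  gns_lifting_facet_defining_general t n b a gGNS ht hmono hcover hmin htn hposn halb hGF hGS hScond
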